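/- arXiv:1302.5987 — 5 statements merged into one kernel-verified Lean document; each statement's English description precedes it below -/
import Mathlib

section
/- For every state 0 ≤ i ≤ d−1 and every s ∈ [0,1), the generating function of the absorbing time satisfies f_i(s) = (−1)^{d−i} · det A_{i+1}(s) / det A_{d+1}(s) (the denominator det A_{d+1}(s) is nonzero for s ∈ [0,1)). -/
open MeasureTheory ProbabilityTheory Matrix
open scoped ENNReal NNReal

/-- `P` is a row-stochastic matrix on the states `{0, 1, …, d}` in which the state `d`
is absorbing. -/
def IsAbsorbingStochastic {d : ℕ} (P : Matrix (Fin (d + 1)) (Fin (d + 1)) ℝ) : Prop :=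
  (∀ i j, 0 ≤ P i j) ∧ (∀ i, ∑ j, P i j = 1) ∧
    ∀ j, P (Fin.last d) j = if j = Fin.last d then 1 else 0

/-- `(X n)` is, under the probability measure `μ`, a Markov chain with transition matrix `P`
started at the state `i`: its finite-dimensional distributions are the ones prescribed by `P`
and the initial state `i`. -/
def IsMarkovChain {Ω : Type*} [MeasurableSpace Ω] (μ : Measure Ω) {d : ℕ}
    (P : Matrix (Fin (d + 1)) (Fin (d + 1)) ℝ) (i : Fin (d + 1))
    (X : ℕ → Ω → Fin (d + 1)) : Prop :=
  IsProbabilityMeasure μ ∧ (∀ n, Measurable (X n)) ∧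
    ∀ (n : ℕ) (path : ℕ → Fin (d + 1)),
      (μ {ω | ∀ k ≤ n, X k ω = path k}).toReal =
        (if path 0 = i then 1 else 0) * ∏ k ∈ Finset.range n, P (path k) (path (k + 1))

/-- The hitting time `τ = inf {n | X n = d}` of the absorbing state `d`,
with value `⊤ = ∞` if the state `d` is never reached. -/
noncomputable def hitTime {Ω : Type*} {d : ℕ} (X : ℕ → Ω → Fin (d + 1)) (ω : Ω) : ℕ∞ :=
  ⨅ (m : ℕ) (_ : X m ω = Fin.last d), (m : ℕ∞)

/-- The generating function `f(s) = E[s^τ]` of the hitting time `τ` of the state `d`,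
with the convention `s^∞ = 0`. -/
noncomputable def genFun {Ω : Type*} [MeasurableSpace Ω] (μ : Measure Ω) {d : ℕ}
    (X : ℕ → Ω → Fin (d + 1)) (s : ℝ) : ℝ :=
  ∫ ω, (if hitTime X ω = ⊤ then 0 else s ^ (hitTime X ω).toNat) ∂μ

/-- `subA P s j` is the matrix `A_{j+1}(s)` of the paper: the `d × d` matrix obtained from
`I_{d+1} - s • P` by deleting its last row and its column of index `j`. -/
noncomputable def subA {R : Type*} [CommRing R] {d : ℕ}
    (P : Matrix (Fin (d + 1)) (Fin (d + 1)) R) (s : R) (j : Fin (d + 1)) :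
    Matrix (Fin d) (Fin d) R :=
  ((1 : Matrix (Fin (d + 1)) (Fin (d + 1)) R) - s • P).submatrix Fin.castSucc j.succAbove

/-- `P` is skip-free upward: upward jumps are of unit size only. -/
def SkipFreeUpward {d : ℕ} (P : Matrix (Fin (d + 1)) (Fin (d + 1)) ℝ) : Prop :=
  ∀ i j : Fin (d + 1), (i : ℕ) + 1 < (j : ℕ) → P i j = 0


namespace GFAux

open Matrix Finset Filter MeasureTheory

variable {d : ℕ}

lemma pow_stoch (P : Matrix (Fin (d+1)) (Fin (d+1)) ℝ)
    (h0 : ∀ i j, 0 ≤ P i j) (h1 : ∀ i, ∑ j, P i j = 1) (n : ℕ) :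
    (∀ i j, 0 ≤ (P ^ n) i j) ∧ (∀ i, ∑ j, (P ^ n) i j = 1) := by
  induction n with
  | zero =>
    constructor
    · intro i j; simp [Matrix.one_apply]; positivity
    · intro i; simp [Matrix.one_apply]
  | succ n ih =>
    constructor
    · intro i j
      rw [pow_succ, Matrix.mul_apply]
      exact Finset.sum_nonneg fun k _ => mul_nonneg (ih.1 i k) (h0 k j)
    · intro i
      simp only [pow_succ, Matrix.mul_apply]
      rw [Finset.sum_comm]
      simp_rw [← Finset.mul_sum, h1]
      simpa using ih.2 i

lemma powEntry_le_one (P : Matrix (Fin (d+1)) (Fin (d+1)) ℝ)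
    (h0 : ∀ i j, 0 ≤ P i j) (h1 : ∀ i, ∑ j, P i j = 1) (n : ℕ) (i j : Fin (d+1)) :
    (P ^ n) i j ≤ 1 := by
  have := (pow_stoch P h0 h1 n).2 i
  calc (P^n) i j ≤ ∑ k, (P^n) i k :=
        Finset.single_le_sum (fun k _ => (pow_stoch P h0 h1 n).1 i k) (Finset.mem_univ j)
    _ = 1 := this

lemma detB_ne (P : Matrix (Fin (d+1)) (Fin (d+1)) ℝ)
    (h0 : ∀ i j, 0 ≤ P i j) (h1 : ∀ i, ∑ j, P i j = 1)
    {s : ℝ} (hs0 : 0 ≤ s) (hs1 : s < 1) :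
    ((1 : Matrix (Fin (d+1)) (Fin (d+1)) ℝ) - s • P).det ≠ 0 := by
  apply det_ne_zero_of_sum_row_lt_diag
  intro k
  have hsum : ∑ j ∈ Finset.univ.erase k, P k j = 1 - P k k := by
    rw [Finset.sum_erase_eq_sub (Finset.mem_univ k), h1]
  have hPk : P k k ≤ 1 := by
    have := Finset.single_le_sum (fun j _ => h0 k j) (Finset.mem_univ k)
    simpa [h1 k] using this
  have e1 : ∀ j ∈ Finset.univ.erase k,
      ‖((1 : Matrix (Fin (d+1)) (Fin (d+1)) ℝ) - s • P) k j‖ = s * P k j := by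
    intro j hj
    have hjk : j ≠ k := (Finset.mem_erase.mp hj).1
    simp only [Matrix.sub_apply, Matrix.one_apply, if_neg (Ne.symm hjk), Matrix.smul_apply,
      smul_eq_mul, zero_sub, norm_neg, Real.norm_eq_abs]
    exact abs_of_nonneg (mul_nonneg hs0 (h0 k j))
  rw [Finset.sum_congr rfl e1]
  have e2 : ‖((1 : Matrix (Fin (d+1)) (Fin (d+1)) ℝ) - s • P) k k‖ = 1 - s * P k k := by
    have : s * P k k ≤ 1 := le_trans (mul_le_one₀ hs1.le (h0 k k) hPk) le_rfl
    simp only [Matrix.sub_apply, Matrix.one_apply, if_pos rfl, if_true, Matrix.smul_apply,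
      smul_eq_mul, Real.norm_eq_abs]
    exact abs_of_nonneg (by linarith)
  rw [e2, ← Finset.mul_sum, hsum]
  nlinarith [h0 k k, hPk]

lemma tsum_entry (P : Matrix (Fin (d+1)) (Fin (d+1)) ℝ)
    (h0 : ∀ i j, 0 ≤ P i j) (h1 : ∀ i, ∑ j, P i j = 1)
    {s : ℝ} (hs0 : 0 ≤ s) (hs1 : s < 1)
    (hdet : ((1 : Matrix (Fin (d+1)) (Fin (d+1)) ℝ) - s • P).det ≠ 0)
    (hpb : ∀ n i j, (P ^ n) i j ≤ 1)
    (i j : Fin (d+1)) :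
    ∑' n : ℕ, s ^ n * (P ^ n) i j
      = ((1 : Matrix (Fin (d+1)) (Fin (d+1)) ℝ) - s • P)⁻¹ i j := by
  set B := (1 : Matrix (Fin (d+1)) (Fin (d+1)) ℝ) - s • P with hB
  have hunit : IsUnit B.det := isUnit_iff_ne_zero.mpr hdet
  have hgeo : ∀ N : ℕ, (∑ n ∈ Finset.range N, (s • P) ^ n)
      = (1 - (s • P) ^ N) * B⁻¹ := by
    intro N
    have h := geom_sum_mul_neg (s • P) N
    calc (∑ n ∈ Finset.range N, (s • P) ^ n)
        = (∑ n ∈ Finset.range N, (s • P) ^ n) * (B * B⁻¹) := by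
          rw [Matrix.mul_nonsing_inv _ hunit, mul_one]
      _ = ((∑ n ∈ Finset.range N, (s • P) ^ n) * B) * B⁻¹ := by rw [mul_assoc]
      _ = (1 - (s • P) ^ N) * B⁻¹ := by rw [hB, h]
  have hps : ∀ N : ℕ, (∑ n ∈ Finset.range N, s ^ n * (P ^ n) i j)
      = B⁻¹ i j - ∑ k, ((s • P) ^ N) i k * B⁻¹ k j := by
    intro N
    have := congrArg (fun M => M i j) (hgeo N)
    simp only [Matrix.sum_apply, Matrix.mul_apply, Matrix.sub_apply, Matrix.one_apply,
      smul_pow, Matrix.smul_apply, smul_eq_mul] at this ⊢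
    rw [this]
    simp [sub_mul, Finset.sum_sub_distrib, ite_mul, Finset.sum_ite_eq]
  set C : ℝ := ∑ k, |B⁻¹ k j| with hC
  have herr : Tendsto (fun N => ∑ k, ((s • P) ^ N) i k * B⁻¹ k j) atTop (nhds 0) := by
    apply squeeze_zero_norm (a := fun N => s ^ N * C)
    · intro N
      calc ‖∑ k, ((s • P) ^ N) i k * B⁻¹ k j‖
          ≤ ∑ k, ‖((s • P) ^ N) i k * B⁻¹ k j‖ := norm_sum_le _ _
        _ ≤ ∑ k, s ^ N * |B⁻¹ k j| := by
            apply Finset.sum_le_sum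
            intro k _
            rw [norm_mul, smul_pow, Matrix.smul_apply, smul_eq_mul, norm_mul]
            have hb : ‖(P ^ N) i k‖ ≤ 1 := by
              rw [Real.norm_eq_abs, abs_of_nonneg ((pow_stoch P h0 h1 N).1 i k)]
              exact hpb N i k
            have hsN : ‖s ^ N‖ = s ^ N := by
              rw [Real.norm_eq_abs, abs_of_nonneg (pow_nonneg hs0 N)]
            rw [hsN]
            calc s ^ N * ‖(P ^ N) i k‖ * ‖B⁻¹ k j‖
                ≤ s ^ N * 1 * ‖B⁻¹ k j‖ := by
                  apply mul_le_mul_of_nonneg_right _ (norm_nonneg _)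
                  exact mul_le_mul_of_nonneg_left hb (pow_nonneg hs0 N)
              _ = s ^ N * |B⁻¹ k j| := by rw [mul_one, Real.norm_eq_abs]
        _ = s ^ N * C := by rw [hC, Finset.mul_sum]
    · have := (tendsto_pow_atTop_nhds_zero_of_lt_one hs0 hs1).mul_const C
      simpa using this
  have hlim : Tendsto (fun N => ∑ n ∈ Finset.range N, s ^ n * (P ^ n) i j)
      atTop (nhds (B⁻¹ i j)) := by
    simp_rw [hps]
    simpa using (tendsto_const_nhds (x := B⁻¹ i j)).sub herr
  have hsummable : Summable (fun n : ℕ => s ^ n * (P ^ n) i j) := by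
    apply Summable.of_norm_bounded (summable_geometric_of_lt_one hs0 hs1)
    intro n
    rw [norm_mul, Real.norm_eq_abs, abs_of_nonneg (pow_nonneg hs0 n), Real.norm_eq_abs,
      abs_of_nonneg ((pow_stoch P h0 h1 n).1 i j)]
    calc s ^ n * (P ^ n) i j ≤ s ^ n * 1 :=
        mul_le_mul_of_nonneg_left (hpb n i j) (pow_nonneg hs0 n)
      _ = s ^ n := mul_one _
  exact tendsto_nhds_unique hsummable.hasSum.tendsto_sum_nat hlim

lemma adj_entry (P : Matrix (Fin (d+1)) (Fin (d+1)) ℝ) (s : ℝ) (i : Fin (d+1)) :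
    adjugate ((1 : Matrix (Fin (d+1)) (Fin (d+1)) ℝ) - s • P) i (Fin.last d)
      = (-1) ^ (d + (i : ℕ)) *
        (((1 : Matrix (Fin (d+1)) (Fin (d+1)) ℝ) - s • P).submatrix Fin.castSucc i.succAbove).det := by
  set B := (1 : Matrix (Fin (d+1)) (Fin (d+1)) ℝ) - s • P with hB
  rw [adjugate_apply, det_succ_row _ (Fin.last d)]
  rw [Finset.sum_eq_single i]
  · rw [updateRow_self]
    have h2 : ((B.updateRow (Fin.last d) (Pi.single i 1)).submatrix
          (Fin.last d).succAbove i.succAbove) = B.submatrix Fin.castSucc i.succAbove := by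
      ext a b
      rw [Fin.succAbove_last]
      simp only [submatrix_apply]
      rw [updateRow_ne (Fin.ne_last_of_lt (Fin.castSucc_lt_last a) : a.castSucc ≠ Fin.last d)]
    rw [h2]
    simp [Fin.val_last]
  · intro j _ hj
    rw [updateRow_self, Pi.single_eq_of_ne hj]
    ring
  · simp

lemma detB_expand (P : Matrix (Fin (d+1)) (Fin (d+1)) ℝ)
    (hlast : ∀ j, P (Fin.last d) j = if j = Fin.last d then 1 else 0) (s : ℝ) :
    ((1 : Matrix (Fin (d+1)) (Fin (d+1)) ℝ) - s • P).det
      = (1 - s) * (((1 : Matrix (Fin (d+1)) (Fin (d+1)) ℝ) - s • P).submatrix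
          Fin.castSucc (Fin.last d).succAbove).det := by
  set B := (1 : Matrix (Fin (d+1)) (Fin (d+1)) ℝ) - s • P with hB
  rw [det_succ_row B (Fin.last d)]
  rw [Finset.sum_eq_single (Fin.last d)]
  · have h1 : B (Fin.last d) (Fin.last d) = 1 - s := by
      simp [hB, Matrix.sub_apply, Matrix.one_apply, hlast]
    rw [h1, Fin.succAbove_last]
    have h2 : ((-1 : ℝ)) ^ ((Fin.last d : ℕ) + (Fin.last d : ℕ)) = 1 :=
      Even.neg_one_pow ⟨(Fin.last d : ℕ), rfl⟩
    rw [h2]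
    ring
  · intro j _ hj
    have h1 : B (Fin.last d) j = 0 := by
      simp [hB, Matrix.sub_apply, Matrix.one_apply, hlast, Ne.symm hj, hj]
    rw [h1]; ring
  · simp

/-- weight of a finite path -/
def pw (P : Matrix (Fin (d+1)) (Fin (d+1)) ℝ) (i : Fin (d+1)) (n : ℕ)
    (p : Fin (n+1) → Fin (d+1)) : ℝ :=
  (if p 0 = i then 1 else 0) * ∏ k : Fin n, P (p k.castSucc) (p k.succ)

lemma sum_pw (P : Matrix (Fin (d+1)) (Fin (d+1)) ℝ) (i : Fin (d+1)) :
    ∀ (n : ℕ) (j : Fin (d+1)),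
      ∑ p ∈ Finset.univ.filter (fun p : Fin (n+1) → Fin (d+1) => p (Fin.last n) = j),
        pw P i n p = (P ^ n) i j := by
  intro n
  induction n with
  | zero =>
    intro j
    rw [Finset.sum_filter]
    rw [Fintype.sum_equiv (Equiv.funUnique (Fin 1) (Fin (d+1)))
      (fun p : Fin 1 → Fin (d+1) => if p (Fin.last 0) = j then pw P i 0 p else 0)
      (fun x : Fin (d+1) => if x = j then (if x = i then (1:ℝ) else 0) else 0)
      (fun p => by simp [pw, Equiv.funUnique, Fin.last])]
    rw [pow_zero, Matrix.one_apply]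
    by_cases hji : j = i
    · subst hji; simp
    · rw [Finset.sum_eq_zero, if_neg (by exact fun h => hji (h ▸ rfl))]
      intro x _
      by_cases hx : x = j
      · subst hx; simp [hji]
      · simp [hx]
  | succ n ih =>
    intro j
    have key : ∀ q : Fin (n+1) → Fin (d+1),
        pw P i (n+1) (Fin.snoc q j) = pw P i n q * P (q (Fin.last n)) j := by
      intro q
      unfold pw
      rw [Fin.prod_univ_castSucc]
      have h0' : (Fin.snoc q j : Fin (n+2) → Fin (d+1)) 0 = q 0 := by
        rw [show (0 : Fin (n+2)) = Fin.castSucc 0 by rfl, Fin.snoc_castSucc]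
      have hterm : ∀ k : Fin n,
          P ((Fin.snoc q j : Fin (n+2) → Fin (d+1)) k.castSucc.castSucc)
            ((Fin.snoc q j : Fin (n+2) → Fin (d+1)) k.castSucc.succ)
          = P (q k.castSucc) (q k.succ) := by
        intro k
        rw [Fin.snoc_castSucc, Fin.succ_castSucc, Fin.snoc_castSucc]
      have hlast :
          P ((Fin.snoc q j : Fin (n+2) → Fin (d+1)) (Fin.last n).castSucc)
            ((Fin.snoc q j : Fin (n+2) → Fin (d+1)) (Fin.last n).succ)
          = P (q (Fin.last n)) j := by
        rw [Fin.snoc_castSucc, Fin.succ_last, Fin.snoc_last]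
      rw [Finset.prod_congr rfl (fun k _ => hterm k), hlast, h0']
      ring
    have bij : ∑ p ∈ Finset.univ.filter
          (fun p : Fin (n+2) → Fin (d+1) => p (Fin.last (n+1)) = j), pw P i (n+1) p
        = ∑ q : Fin (n+1) → Fin (d+1), pw P i n q * P (q (Fin.last n)) j := by
      apply Finset.sum_nbij' (i := fun p : Fin (n+2) → Fin (d+1) => Fin.init p)
        (j := fun q : Fin (n+1) → Fin (d+1) => (Fin.snoc q j : Fin (n+2) → Fin (d+1)))
      · intro p hp; exact Finset.mem_univ _
      · intro q _
        simp only [Finset.mem_filter, Finset.mem_univ, true_and]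
        simp
      · intro p hp
        have hpj : p (Fin.last (n+1)) = j := (Finset.mem_filter.mp hp).2
        rw [← hpj]
        exact Fin.snoc_init_self p
      · intro q _; simp
      · intro p hp
        have hpj : p (Fin.last (n+1)) = j := (Finset.mem_filter.mp hp).2
        conv_lhs => rw [← Fin.snoc_init_self p, hpj]
        exact key (Fin.init p)
    rw [bij, ← Finset.sum_fiberwise Finset.univ (fun q : Fin (n+1) → Fin (d+1) => q (Fin.last n))
      (fun q => pw P i n q * P (q (Fin.last n)) j)]
    rw [pow_succ, Matrix.mul_apply]
    apply Finset.sum_congr rfl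
    intro j' _
    rw [← ih j', Finset.sum_mul]
    apply Finset.sum_congr rfl
    intro q hq
    rw [(Finset.mem_filter.mp hq).2]

lemma cylMeas {Ω : Type*} [MeasurableSpace Ω]
    (P : Matrix (Fin (d+1)) (Fin (d+1)) ℝ) (i : Fin (d+1))
    (μi : MeasureTheory.Measure Ω) (X : ℕ → Ω → Fin (d+1))
    (hfdd : ∀ (n : ℕ) (path : ℕ → Fin (d + 1)),
      (μi {ω | ∀ k ≤ n, X k ω = path k}).toReal =
        (if path 0 = i then 1 else 0) * ∏ k ∈ Finset.range n, P (path k) (path (k + 1)))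
    (n : ℕ) (p : Fin (n+1) → Fin (d+1)) :
    (μi {ω | ∀ k : Fin (n+1), X (k : ℕ) ω = p k}).toReal = pw P i n p := by
  set path : ℕ → Fin (d+1) := fun m => p ⟨min m n, Nat.lt_succ_of_le (min_le_right m n)⟩ with hpath
  have hset : {ω | ∀ k ≤ n, X k ω = path k} = {ω | ∀ k : Fin (n+1), X (k : ℕ) ω = p k} := by
    ext ω
    constructor
    · intro h k
      have := h (k : ℕ) (Nat.lt_succ_iff.mp k.isLt)
      simp only [hpath] at this
      rwa [show (⟨min (k:ℕ) n, Nat.lt_succ_of_le (min_le_right _ n)⟩ : Fin (n+1)) = k from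
        Fin.ext (min_eq_left (Nat.lt_succ_iff.mp k.isLt))] at this
    · intro h k hk
      have := h ⟨k, Nat.lt_succ_of_le hk⟩
      simpa [hpath, Fin.ext_iff, min_eq_left hk] using this
  have h0 : path 0 = p 0 := by
    rw [hpath]; exact congrArg p (Fin.ext (by simp))
  have hprod : ∏ k ∈ Finset.range n, P (path k) (path (k + 1))
      = ∏ k : Fin n, P (p k.castSucc) (p k.succ) := by
    rw [← Fin.prod_univ_eq_prod_range (fun m => P (path m) (path (m+1))) n]
    apply Finset.prod_congr rfl
    intro k _
    have h1 : path (k : ℕ) = p k.castSucc :=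
      congrArg p (Fin.ext (by simp [Nat.le_of_lt k.isLt, min_eq_left]))
    have h2 : path ((k : ℕ) + 1) = p k.succ :=
      congrArg p (Fin.ext (by simp [min_eq_left, Nat.succ_le_of_lt k.isLt]))
    rw [h1, h2]
  rw [← hset, hfdd n path, h0, hprod, pw]

lemma phiMeas {Ω : Type*} [MeasurableSpace Ω]
    (P : Matrix (Fin (d+1)) (Fin (d+1)) ℝ) (i : Fin (d+1))
    (μi : MeasureTheory.Measure Ω) [MeasureTheory.IsProbabilityMeasure μi]
    (X : ℕ → Ω → Fin (d+1))
    (hmeas : ∀ n, Measurable (X n))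
    (hfdd : ∀ (n : ℕ) (path : ℕ → Fin (d + 1)),
      (μi {ω | ∀ k ≤ n, X k ω = path k}).toReal =
        (if path 0 = i then 1 else 0) * ∏ k ∈ Finset.range n, P (path k) (path (k + 1)))
    (n : ℕ) (Φ : (Fin (n+1) → Fin (d+1)) → Prop) [DecidablePred Φ]
    (S : Set Ω) (hS : S = {ω | Φ (fun k => X (k : ℕ) ω)}) :
    (μi S).toReal = ∑ p ∈ Finset.univ.filter Φ, pw P i n p := by
  classical
  subst hS
  set Cyl : (Fin (n+1) → Fin (d+1)) → Set Ω :=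
    fun p => {ω | ∀ k : Fin (n+1), X (k : ℕ) ω = p k} with hCyl
  have hCylMeas : ∀ p, MeasurableSet (Cyl p) := by
    intro p
    have : Cyl p = ⋂ k : Fin (n+1), (X (k : ℕ)) ⁻¹' {p k} := by
      ext ω; simp [hCyl, Set.mem_iInter]
    rw [this]
    exact MeasurableSet.iInter fun k => (hmeas k) (measurableSet_singleton _)
  have hset : {ω | Φ (fun k => X (k : ℕ) ω)} = ⋃ p ∈ Finset.univ.filter Φ, Cyl p := by
    ext ω
    simp only [Set.mem_iUnion, Set.mem_setOf_eq, Finset.mem_filter, Finset.mem_univ, true_and,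
      exists_prop]
    constructor
    · intro h
      exact ⟨fun k => X (k : ℕ) ω, h, fun k => rfl⟩
    · rintro ⟨p, hp, hmem⟩
      have : (fun k : Fin (n+1) => X (k : ℕ) ω) = p := funext hmem
      rwa [this]
  have hdisj : (↑(Finset.univ.filter Φ) : Set (Fin (n+1) → Fin (d+1))).PairwiseDisjoint Cyl := by
    intro p _ q _ hpq
    refine Set.disjoint_left.mpr fun ω hωp hωq => hpq (funext fun k => ?_)
    rw [← hωp k, ← hωq k]
  rw [hset, MeasureTheory.measure_biUnion_finset hdisj fun p _ => hCylMeas p,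
    ENNReal.toReal_sum (fun p _ => MeasureTheory.measure_ne_top μi (Cyl p))]
  exact Finset.sum_congr rfl fun p _ => cylMeas P i μi X hfdd n p

end GFAux

/-- For every state `0 ≤ i ≤ d-1` and every `s ∈ [0,1)`, the generating function of the
absorbing time satisfies `f_i(s) = (-1)^(d-i) · det A_{i+1}(s) / det A_{d+1}(s)`, the
denominator being nonzero. -/
theorem genFun_eq_det_ratio {Ω : Type*} [MeasurableSpace Ω] {d : ℕ} (hd : 1 ≤ d)
    (P : Matrix (Fin (d + 1)) (Fin (d + 1)) ℝ) (hP : IsAbsorbingStochastic P)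
    (μ : Fin (d + 1) → Measure Ω) (X : ℕ → Ω → Fin (d + 1))
    (hchain : ∀ i, IsMarkovChain (μ i) P i X)
    (i : Fin (d + 1)) (hi : i ≠ Fin.last d) (s : ℝ) (hs0 : 0 ≤ s) (hs1 : s < 1) :
    det (subA P s (Fin.last d)) ≠ 0 ∧
      genFun (μ i) X s =
        (-1) ^ (d - (i : ℕ)) * det (subA P s i) / det (subA P s (Fin.last d)) := by
  classical
  obtain ⟨h0, h1, hlast⟩ := hP
  obtain ⟨hprob, hmeas, hfdd⟩ := hchain i
  haveI := hprob
  set T : Fin (d+1) := Fin.last d with hT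
  have hdet : ((1 : Matrix (Fin (d+1)) (Fin (d+1)) ℝ) - s • P).det ≠ 0 :=
    GFAux.detB_ne P h0 h1 hs0 hs1
  have hexp : ((1 : Matrix (Fin (d+1)) (Fin (d+1)) ℝ) - s • P).det
      = (1 - s) * det (subA P s T) := by
    rw [GFAux.detB_expand P hlast s]; rfl
  have h1s : (1 : ℝ) - s ≠ 0 := by linarith
  have hdsub : det (subA P s T) ≠ 0 := by
    intro hc; apply hdet; rw [hexp, hc, mul_zero]
  refine ⟨hdsub, ?_⟩
  -- the events A n = {X n = T}
  set A : ℕ → Set Ω := fun n => {ω | X n ω = T} with hA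
  have hAmeas : ∀ n, MeasurableSet (A n) := fun n => (hmeas n) (measurableSet_singleton T)
  have ha : ∀ n : ℕ, (μ i (A n)).toReal = (P ^ n) i T := by
    intro n
    rw [GFAux.phiMeas P i (μ i) X hmeas hfdd n (fun p => p (Fin.last n) = T) (A n) rfl,
      GFAux.sum_pw P i n T]
  -- absorption
  have hzero : ∀ n : ℕ, μ i (A n \ A (n+1)) = 0 := by
    intro n
    have hzsum : ∑ p ∈ Finset.univ.filter
        (fun p : Fin (n+2) → Fin (d+1) =>
          p ⟨n, by omega⟩ = T ∧ ¬ (p (Fin.last (n+1)) = T)),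
        GFAux.pw P i (n+1) p = 0 := by
      apply Finset.sum_eq_zero
      intro p hp
      obtain ⟨hp1, hp2⟩ := (Finset.mem_filter.mp hp).2
      have hfac : P (p (Fin.last n).castSucc) (p (Fin.last n).succ) = 0 := by
        have e1 : (Fin.last n).castSucc = (⟨n, by omega⟩ : Fin (n+2)) := Fin.ext (by simp)
        have e2 : (Fin.last n).succ = Fin.last (n+1) := Fin.succ_last n
        rw [e1, e2, hp1, hT, hlast]
        rw [if_neg]
        intro hc
        exact hp2 (by rw [hc, hT])
      unfold GFAux.pw
      rw [Finset.prod_eq_zero (Finset.mem_univ (Fin.last n)) hfac, mul_zero]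
    have heq := GFAux.phiMeas P i (μ i) X hmeas hfdd (n+1)
      (fun p : Fin (n+2) → Fin (d+1) =>
        p ⟨n, by omega⟩ = T ∧ ¬ (p (Fin.last (n+1)) = T))
      (A n \ A (n+1)) (by
        ext ω
        simp only [hA, Set.mem_diff, Set.mem_setOf_eq]
        constructor
        · rintro ⟨x1, x2⟩; exact ⟨x1, x2⟩
        · rintro ⟨x1, x2⟩; exact ⟨x1, x2⟩)
    rw [hzsum] at heq
    have hne := measure_ne_top (μ i) (A n \ A (n+1))
    rcases (ENNReal.toReal_eq_zero_iff _).mp heq with h | h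
    · exact h
    · exact absurd h hne
  have habsorb : ∀ k n : ℕ, k ≤ n → μ i (A k \ A n) = 0 := by
    intro k n hkn
    induction n, hkn using Nat.le_induction with
    | base => simp
    | succ n hkn ih =>
      have hsub : A k \ A (n+1) ⊆ (A k \ A n) ∪ (A n \ A (n+1)) := by
        intro ω hω
        by_cases hn : ω ∈ A n
        · exact Or.inr ⟨hn, hω.2⟩
        · exact Or.inl ⟨hω.1, hn⟩
      exact le_antisymm (le_trans (measure_mono hsub)
        (le_of_eq (measure_union_null ih (hzero n)))) (by positivity)
  -- hitting time characterization
  have hitFind : ∀ ω (h : ∃ m, X m ω = T), hitTime X ω = (Nat.find h : ℕ∞) := by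
    intro ω h
    apply le_antisymm
    · exact iInf₂_le (Nat.find h) (Nat.find_spec h)
    · exact le_iInf₂ fun m hm => by exact_mod_cast Nat.find_min' h hm
  have hitTop : ∀ ω, ¬ (∃ m, X m ω = T) → hitTime X ω = ⊤ := by
    intro ω h
    exact le_antisymm le_top (le_iInf₂ fun m hm => absurd ⟨m, hm⟩ h)
  have hitEq : ∀ ω (n : ℕ), hitTime X ω = (n : ℕ∞) ↔ (X n ω = T ∧ ∀ k < n, X k ω ≠ T) := by
    intro ω n
    constructor
    · intro h
      have hex : ∃ m, X m ω = T := by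
        by_contra hc
        rw [hitTop ω hc] at h
        exact (ENat.top_ne_coe n) h
      rw [hitFind ω hex] at h
      have hn : Nat.find hex = n := Nat.cast_injective h
      exact ⟨hn ▸ Nat.find_spec hex, fun k hk => Nat.find_min hex (hn ▸ hk)⟩
    · rintro ⟨hn, hk⟩
      have hex : ∃ m, X m ω = T := ⟨n, hn⟩
      rw [hitFind ω hex]
      exact congrArg (fun m : ℕ => (m : ℕ∞)) ((Nat.find_eq_iff hex).mpr ⟨hn, fun m hm hc => hk m hm hc⟩)
  -- the sets {τ = n}
  set Tset : ℕ → Set Ω := fun n => {ω | hitTime X ω = (n : ℕ∞)} with hTsetdef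
  have hTset : ∀ n, Tset n = {ω | X n ω = T ∧ ∀ k < n, X k ω ≠ T} := by
    intro n; ext ω; exact hitEq ω n
  have hTmeas : ∀ n, MeasurableSet (Tset n) := by
    intro n
    rw [hTset n]
    have e : {ω | X n ω = T ∧ ∀ k < n, X k ω ≠ T}
        = (X n ⁻¹' {T}) ∩ ⋂ (k : ℕ) (_ : k < n), (X k ⁻¹' {T})ᶜ := by
      ext ω; simp [Set.mem_iInter]
    rw [e]
    exact ((hmeas n) (measurableSet_singleton T)).inter
      (MeasurableSet.iInter fun k => MeasurableSet.iInter fun _ =>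
        ((hmeas k) (measurableSet_singleton T)).compl)
  have ht0 : (μ i (Tset 0)).toReal = 0 := by
    have e : Tset 0 = A 0 := by
      rw [hTset 0]; ext ω; simp [hA]
    rw [e, ha 0, pow_zero, Matrix.one_apply_ne hi]
  have htn : ∀ n : ℕ, (μ i (Tset (n+1))).toReal = (P ^ (n+1)) i T - (P ^ n) i T := by
    intro n
    set U : Set Ω := ⋃ k ∈ Finset.range (n+1), A k with hU
    have hUmeas : MeasurableSet U :=
      Finset.measurableSet_biUnion _ fun k _ => hAmeas k
    have hdecomp : Tset (n+1) = A (n+1) \ U := by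
      rw [hTset (n+1)]
      ext ω
      constructor
      · rintro ⟨x1, x2⟩
        refine ⟨x1, fun hc => ?_⟩
        rcases Set.mem_iUnion₂.mp hc with ⟨k, hk, hωk⟩
        exact x2 k (Finset.mem_range.mp hk) hωk
      · rintro ⟨x1, x2⟩
        exact ⟨x1, fun k hk hωk => x2 (Set.mem_iUnion₂.mpr ⟨k, Finset.mem_range.mpr hk, hωk⟩)⟩
    have hinter : μ i (A (n+1) ∩ U) = μ i (A n) := by
      apply le_antisymm
      · have hsub : A (n+1) ∩ U ⊆ A n ∪ ⋃ k ∈ Finset.range (n+1), (A k \ A n) := by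
          rintro ω ⟨hω1, hω2⟩
          by_cases hn : ω ∈ A n
          · exact Or.inl hn
          · rcases Set.mem_iUnion₂.mp hω2 with ⟨k, hk, hωk⟩
            exact Or.inr (Set.mem_iUnion₂.mpr ⟨k, hk, hωk, hn⟩)
        have hnull : μ i (⋃ k ∈ Finset.range (n+1), (A k \ A n)) = 0 := by
          refine (measure_biUnion_null_iff (Finset.range (n+1)).countable_toSet).mpr ?_
          intro k hk
          exact habsorb k n (Nat.lt_succ_iff.mp (Finset.mem_range.mp (by simpa using hk)))
        calc μ i (A (n+1) ∩ U) ≤ μ i (A n ∪ ⋃ k ∈ Finset.range (n+1), (A k \ A n)) :=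
              measure_mono hsub
          _ ≤ μ i (A n) + μ i (⋃ k ∈ Finset.range (n+1), (A k \ A n)) := measure_union_le _ _
          _ = μ i (A n) := by rw [hnull, add_zero]
      · have hsub : A n ⊆ (A (n+1) ∩ U) ∪ (A n \ A (n+1)) := by
          intro ω hω
          by_cases hn : ω ∈ A (n+1)
          · exact Or.inl ⟨hn, Set.mem_iUnion₂.mpr ⟨n, by simp, hω⟩⟩
          · exact Or.inr ⟨hω, hn⟩
        calc μ i (A n) ≤ μ i ((A (n+1) ∩ U) ∪ (A n \ A (n+1))) := measure_mono hsub
          _ ≤ μ i (A (n+1) ∩ U) + μ i (A n \ A (n+1)) := measure_union_le _ _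
          _ = μ i (A (n+1) ∩ U) := by rw [hzero n, add_zero]
    have hsplit : μ i (A (n+1) ∩ U) + μ i (A (n+1) \ U) = μ i (A (n+1)) :=
      measure_inter_add_diff (A (n+1)) hUmeas
    rw [hinter, ← hdecomp] at hsplit
    have htr := congrArg ENNReal.toReal hsplit
    rw [ENNReal.toReal_add (measure_ne_top _ _) (measure_ne_top _ _)] at htr
    rw [← ha (n+1), ← ha n, ← htr]
    ring
  -- the generating function as a series
  have hgen : genFun (μ i) X s = ∑' n : ℕ, (μ i (Tset n)).toReal * s ^ n := by
    unfold genFun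
    have hgsum : ∀ ω, (if hitTime X ω = ⊤ then (0:ℝ) else s ^ (hitTime X ω).toNat)
        = ∑' n : ℕ, Set.indicator (Tset n) (fun _ => s ^ n) ω := by
      intro ω
      by_cases hTop : hitTime X ω = ⊤
      · rw [if_pos hTop]
        have hz : ∀ n : ℕ, Set.indicator (Tset n) (fun _ => s ^ n) ω = 0 := by
          intro n
          apply Set.indicator_of_notMem
          intro hc
          simp only [hTsetdef, Set.mem_setOf_eq] at hc
          rw [hTop] at hc
          exact (ENat.top_ne_coe n) hc
        rw [tsum_congr hz, tsum_zero]
      · obtain ⟨m, hm⟩ : ∃ m : ℕ, hitTime X ω = (m : ℕ∞) :=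
          ⟨(hitTime X ω).toNat, (ENat.coe_toNat hTop).symm⟩
        rw [if_neg hTop, hm, ENat.toNat_coe]
        rw [tsum_eq_single m]
        · rw [Set.indicator_of_mem]
          simp only [hTsetdef, Set.mem_setOf_eq]
          exact hm
        · intro n hn
          apply Set.indicator_of_notMem
          intro hc
          simp only [hTsetdef, Set.mem_setOf_eq] at hc
          rw [hm] at hc
          exact hn (Nat.cast_injective hc).symm
    rw [integral_congr_ae (Filter.Eventually.of_forall hgsum)]
    rw [MeasureTheory.integral_tsum
      (fun n => (measurable_const.indicator (hTmeas n)).aestronglyMeasurable)]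
    · apply tsum_congr
      intro n
      rw [integral_indicator_const _ (hTmeas n)]
      simp [mul_comm, measureReal_def]
    · -- the lintegral bound
      have hst : s.toNNReal < 1 := Real.toNNReal_lt_one.mpr hs1
      have hsnn : ∀ n : ℕ, (‖(s:ℝ) ^ n‖₊ : ℝ≥0∞) = ((s.toNNReal ^ n : ℝ≥0) : ℝ≥0∞) := by
        intro n
        norm_cast
        rw [← Real.toNNReal_pow hs0]
        exact (Real.toNNReal_eq_nnnorm_of_nonneg (pow_nonneg hs0 n)).symm
      have hbound : ∀ n : ℕ, ∫⁻ ω, ‖Set.indicator (Tset n) (fun _ => s ^ n) ω‖₊ ∂ (μ i)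
          ≤ ((s.toNNReal ^ n : ℝ≥0) : ℝ≥0∞) := by
        intro n
        calc ∫⁻ ω, ‖Set.indicator (Tset n) (fun _ => s ^ n) ω‖₊ ∂ (μ i)
            ≤ ∫⁻ _, (‖(s:ℝ) ^ n‖₊ : ℝ≥0∞) ∂ (μ i) := by
              apply lintegral_mono
              intro ω
              refine ENNReal.coe_le_coe.mpr ?_
              rw [← NNReal.coe_le_coe]
              simpa using norm_indicator_le_norm_self (fun _ => s ^ n) ω (s := Tset n)
          _ = (‖(s:ℝ) ^ n‖₊ : ℝ≥0∞) := by rw [lintegral_const, measure_univ, mul_one]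
          _ = _ := hsnn n
      refine ne_of_lt (lt_of_le_of_lt (ENNReal.tsum_le_tsum hbound) ?_)
      rw [← ENNReal.coe_tsum (NNReal.summable_geometric hst)]
      exact ENNReal.coe_lt_top
  -- summing the series
  set a : ℕ → ℝ := fun n => (P ^ n) i T with haa
  have ha0 : a 0 = 0 := by
    simp only [haa, pow_zero]
    exact Matrix.one_apply_ne hi
  set v : ℕ → ℝ := fun n => s ^ n * a n with hv
  have hva : Summable v := by
    apply Summable.of_norm_bounded (summable_geometric_of_lt_one hs0 hs1)
    intro n
    have h0n := (GFAux.pow_stoch P h0 h1 n).1 i T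
    have h1n := GFAux.powEntry_le_one P h0 h1 n i T
    simp only [hv, haa]
    rw [Real.norm_eq_abs, abs_of_nonneg (mul_nonneg (pow_nonneg hs0 n) h0n)]
    calc s ^ n * (P ^ n) i T ≤ s ^ n * 1 := mul_le_mul_of_nonneg_left h1n (pow_nonneg hs0 n)
      _ = s ^ n := mul_one _
  set u : ℕ → ℝ := fun n => (μ i (Tset n)).toReal * s ^ n with hu
  have hub : Summable u := by
    apply Summable.of_norm_bounded (summable_geometric_of_lt_one hs0 hs1)
    intro n
    have hle1 : (μ i (Tset n)).toReal ≤ 1 := by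
      rw [show (1:ℝ) = (μ i Set.univ).toReal by simp]
      exact ENNReal.toReal_mono (measure_ne_top _ _) (measure_mono (Set.subset_univ _))
    have hge0 : 0 ≤ (μ i (Tset n)).toReal := ENNReal.toReal_nonneg
    simp only [hu]
    rw [Real.norm_eq_abs, abs_of_nonneg (mul_nonneg hge0 (pow_nonneg hs0 n))]
    calc (μ i (Tset n)).toReal * s ^ n ≤ 1 * s ^ n :=
        mul_le_mul_of_nonneg_right hle1 (pow_nonneg hs0 n)
      _ = s ^ n := one_mul _
  have hshift : ∀ n : ℕ, u (n+1) = v (n+1) - s * v n := by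
    intro n
    simp only [hu, hv, haa]
    rw [htn n]
    ring
  have hkey : ∑' n, u n = (1 - s) * ∑' n, v n := by
    have hv1 : Summable (fun n => v (n+1)) := (summable_nat_add_iff 1).mpr hva
    have e1 : ∑' n, u n = ∑' n, u (n+1) := by
      rw [Summable.tsum_eq_zero_add hub]
      simp only [hu, ht0]
      ring_nf
    have e2 : ∑' n : ℕ, v (n+1) = (∑' n, v n) - v 0 := by
      rw [Summable.tsum_eq_zero_add hva]; ring
    have e3 : ∑' n, u (n+1) = (∑' n : ℕ, v (n+1)) - s * ∑' n, v n := by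
      rw [tsum_congr hshift, Summable.tsum_sub hv1 (hva.mul_left s), tsum_mul_left]
    rw [e1, e3, e2]
    have hv0 : v 0 = 0 := by simp [hv, ha0]
    rw [hv0]
    ring
  have htsv : ∑' n, v n = ((1 : Matrix (Fin (d+1)) (Fin (d+1)) ℝ) - s • P)⁻¹ i T :=
    GFAux.tsum_entry P h0 h1 hs0 hs1 hdet (fun n a b => GFAux.powEntry_le_one P h0 h1 n a b) i T
  -- final linear algebra
  have hBinv : ((1 : Matrix (Fin (d+1)) (Fin (d+1)) ℝ) - s • P)⁻¹ i T
      = (((1 : Matrix (Fin (d+1)) (Fin (d+1)) ℝ) - s • P).det)⁻¹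
        * ((-1) ^ (d + (i : ℕ)) * det (subA P s i)) := by
    rw [Matrix.inv_def, Matrix.smul_apply, smul_eq_mul, Ring.inverse_eq_inv]
    congr 1
    rw [show Fin.last d = T from rfl] at *
    have := GFAux.adj_entry P s i
    rw [hT]
    rw [this]
    rfl
  have hsign : ((-1:ℝ)) ^ (d + (i : ℕ)) = (-1) ^ (d - (i : ℕ)) := by
    have hle : (i : ℕ) ≤ d := Fin.is_le i
    have e : d + (i : ℕ) = (d - (i : ℕ)) + 2 * (i : ℕ) := by omega
    rw [e, pow_add, pow_mul]
    norm_num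
  rw [hgen]
  rw [show (∑' n : ℕ, (μ i (Tset n)).toReal * s ^ n) = ∑' n, u n from rfl, hkey, htsv, hBinv,
    hexp, hsign]
  field_simp
end

section
/- If P is skip-free upward, then for every s, det A_1(s) = (−1)^d · P(0,1)·P(1,2)⋯P(d−1,d) · s^d. -/
open MeasureTheory ProbabilityTheory Matrix

/-- If `P` is skip-free upward, then for every `s`,
`det A_1(s) = (-1)^d · P(0,1) P(1,2) ⋯ P(d-1,d) · s^d`. -/
theorem det_subA_zero_eq {d : ℕ} (hd : 1 ≤ d)
    (P : Matrix (Fin (d + 1)) (Fin (d + 1)) ℝ) (hP : IsAbsorbingStochastic P)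
    (hsf : SkipFreeUpward P) :
    ∀ s : ℝ, det (subA P s 0) = (-1) ^ d * (∏ i : Fin d, P i.castSucc i.succ) * s ^ d := by
  intro s
  have hzero : ∀ i j : Fin d, (i : ℕ) < (j : ℕ) → subA P s 0 i j = 0 := by
    intro i j hij
    simp only [subA, submatrix_apply, Matrix.sub_apply, Matrix.smul_apply, one_apply, smul_eq_mul]
    have h1 : (0 : Fin (d+1)).succAbove j = j.succ := rfl
    rw [h1]
    have hPz : P i.castSucc j.succ = 0 := hsf _ _ (by simp; omega)
    have hne : i.castSucc ≠ j.succ := by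
      intro h; apply_fun Fin.val at h; simp at h; omega
    simp [hne, hPz]
  have htri : (subA P s 0).BlockTriangular OrderDual.toDual := by
    intro i j h
    exact hzero i j h
  rw [Matrix.det_of_lowerTriangular _ htri]
  have hdiag : ∀ i : Fin d, subA P s 0 i i = -(s * P i.castSucc i.succ) := by
    intro i
    simp only [subA, submatrix_apply, Matrix.sub_apply, Matrix.smul_apply, one_apply, smul_eq_mul]
    have h1 : (0 : Fin (d+1)).succAbove i = i.succ := rfl
    rw [h1]
    have hne : i.castSucc ≠ i.succ := by
      intro h; apply_fun Fin.val at h; simp at h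
    simp [hne]
  simp only [hdiag]
  have : ∀ x : Fin d, -(s * P x.castSucc x.succ) = (-1) * P x.castSucc x.succ * s := by
    intro x; ring
  simp only [this, Finset.prod_mul_distrib, Finset.prod_const, Finset.card_univ,
    Fintype.card_fin]
end

section
/- If P is skip-free upward and the chain started at state 0 is absorbed at d almost surely (P(τ_{0,d} < ∞) = 1), then P(0,1)·P(1,2)⋯P(d−1,d) = ∏_{i=0}^{d−1} (1 − λ_i), where λ_0,…,λ_{d−1} are the d non-unit eigenvalues of P. -/
open MeasureTheory ProbabilityTheory Matrix Filter Topology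

lemma detA_complex {d : ℕ} (P : Matrix (Fin (d+1)) (Fin (d+1)) ℝ)
    (habsorb : ∀ j, P (Fin.last d) j = if j = Fin.last d then 1 else 0)
    (lam : Fin d → ℂ)
    (hlam : ∀ x : ℂ, det (x • (1 : Matrix (Fin (d+1)) (Fin (d+1)) ℂ) - P.map Complex.ofReal) =
        (x - 1) * ∏ i, (x - lam i)) :
    (Complex.ofReal (det (((1 : Matrix (Fin (d+1)) (Fin (d+1)) ℝ) - P).submatrix
      Fin.castSucc Fin.castSucc)) = ∏ i, (1 - lam i)) := by
  set Pc := P.map Complex.ofReal with hPc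
  have hexp : ∀ x : ℂ, det (x • (1 : Matrix (Fin (d+1)) (Fin (d+1)) ℂ) - Pc) =
      (x - 1) * det ((x • (1 : Matrix (Fin (d+1)) (Fin (d+1)) ℂ) - Pc).submatrix
        Fin.castSucc Fin.castSucc) := by
    intro x
    rw [det_succ_row _ (Fin.last d)]
    rw [Finset.sum_eq_single (Fin.last d)]
    · simp [Matrix.smul_apply, Matrix.one_apply, hPc, habsorb, Fin.succAbove_last,
        mul_comm, ← pow_add]
    · intro j _ hj
      have : (x • (1 : Matrix (Fin (d+1)) (Fin (d+1)) ℂ) - Pc) (Fin.last d) j = 0 := by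
        simp [Matrix.smul_apply, Matrix.one_apply, hPc, habsorb, hj, Ne.symm hj]
      simp [this]
    · simp
  -- continuity
  have hcont1 : Continuous fun x : ℂ => det ((x • (1 : Matrix (Fin (d+1)) (Fin (d+1)) ℂ) - Pc).submatrix
        Fin.castSucc Fin.castSucc) := by
    apply Continuous.matrix_det
    apply Continuous.matrix_submatrix
    exact (continuous_id.smul continuous_const).sub continuous_const
  have hcont2 : Continuous fun x : ℂ => ∏ i, (x - lam i) := by
    continuity
  have heq : ∀ x : ℂ, x ≠ 1 → det ((x • (1 : Matrix (Fin (d+1)) (Fin (d+1)) ℂ) - Pc).submatrix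
        Fin.castSucc Fin.castSucc) = ∏ i, (x - lam i) := by
    intro x hx
    have hx1 : x - 1 ≠ 0 := sub_ne_zero.mpr hx
    have h1 : (x - 1) * det ((x • (1 : Matrix (Fin (d+1)) (Fin (d+1)) ℂ) - Pc).submatrix
        Fin.castSucc Fin.castSucc) = (x - 1) * ∏ i, (x - lam i) := (hexp x).symm.trans (hlam x)
    exact mul_left_cancel₀ hx1 h1
  have key : det (((1:ℂ) • (1 : Matrix (Fin (d+1)) (Fin (d+1)) ℂ) - Pc).submatrix
        Fin.castSucc Fin.castSucc) = ∏ i, ((1:ℂ) - lam i) := by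
    have hd : Dense {x : ℂ | x ≠ 1} := dense_compl_singleton 1
    exact congrFun (Continuous.ext_on hd hcont1 hcont2 heq) 1
  have hmap : ((1:ℂ) • (1 : Matrix (Fin (d+1)) (Fin (d+1)) ℂ) - Pc).submatrix
      Fin.castSucc Fin.castSucc = (((1 : Matrix (Fin (d+1)) (Fin (d+1)) ℝ) - P).submatrix
        Fin.castSucc Fin.castSucc).map Complex.ofReal := by
    ext i j
    simp [Matrix.one_apply, hPc, apply_ite]
  rw [← key, hmap]
  exact (RingHom.map_det Complex.ofRealHom (((1 : Matrix (Fin (d+1)) (Fin (d+1)) ℝ) - P).submatrix Fin.castSucc Fin.castSucc))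

set_option maxRecDepth 4000 in
lemma adj_entry {e : ℕ} (P : Matrix (Fin (e+2)) (Fin (e+2)) ℝ) (hsf : SkipFreeUpward P) :
    adjugate ((1 : Matrix (Fin (e+1)) (Fin (e+1)) ℝ) - P.submatrix Fin.castSucc Fin.castSucc)
      0 (Fin.last e) = ∏ i : Fin e, P (i.castSucc).castSucc (i.succ).castSucc := by
  set A := (1 : Matrix (Fin (e+1)) (Fin (e+1)) ℝ) - P.submatrix Fin.castSucc Fin.castSucc with hA
  rw [adjugate_apply]
  set B := A.updateRow (Fin.last e) (Pi.single 0 1) with hB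
  have hrow : ∀ j, B (Fin.last e) j = if j = 0 then 1 else 0 := by
    intro j; simp [hB, Pi.single_apply, eq_comm]
  rw [det_succ_row B (Fin.last e)]
  rw [Finset.sum_eq_single (0 : Fin (e+1))]
  · have hM' : ∀ i j : Fin e, B.submatrix (Fin.last e).succAbove (0 : Fin (e+1)).succAbove i j
        = A i.castSucc j.succ := by
      intro i j
      simp only [Matrix.submatrix_apply, Fin.succAbove_last, Fin.succAbove_zero]
      rw [hB, Matrix.updateRow_ne (Fin.castSucc_lt_last i).ne]
    have htri : (B.submatrix (Fin.last e).succAbove (0 : Fin (e+1)).succAbove).BlockTriangular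
        OrderDual.toDual := by
      intro i j hij
      have hij' : (i : ℕ) < j := hij
      rw [hM']
      have h1 : i.castSucc ≠ j.succ := by
        intro h
        have := congrArg Fin.val h
        simp at this
        omega
      have h2 : P (i.castSucc.castSucc) (j.succ.castSucc) = 0 := by
        apply hsf
        simp
        omega
      simp [hA, Matrix.one_apply, h1, h2, -Fin.castSucc_succ]
    rw [det_of_lowerTriangular _ htri]
    have hdiag : ∀ i : Fin e, B.submatrix (Fin.last e).succAbove (0 : Fin (e+1)).succAbove i i
        = -P (i.castSucc).castSucc (i.succ).castSucc := by
      intro i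
      rw [hM']
      have h1 : i.castSucc ≠ i.succ := by
        intro h
        have := congrArg Fin.val h
        simp at this
      simp [hA, Matrix.one_apply, h1]
    simp only [hdiag, hrow]
    simp only [Fin.val_last, Fin.val_zero, add_zero, if_true, mul_one]
    rw [Finset.prod_congr rfl (fun x _ => (neg_one_mul
        (P x.castSucc.castSucc x.succ.castSucc)).symm), Finset.prod_mul_distrib,
      Finset.prod_const, Finset.card_univ, Fintype.card_fin,
      ← mul_assoc, ← pow_add, Even.neg_one_pow ⟨e, rfl⟩, one_mul]
  · intro j _ hj
    rw [hrow]
    simp [hj]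
  · simp

lemma pathSum {m : ℕ} (M : Matrix (Fin m) (Fin m) ℝ) :
    ∀ (n : ℕ) (i : Fin m),
    ∑ q : Fin (n+1) → Fin m, (if q 0 = i then (1:ℝ) else 0) *
      ∏ k : Fin n, M (q k.castSucc) (q k.succ) = ∑ j, (M^n) i j := by
  intro n
  induction n with
  | zero =>
    intro i
    rw [← ((Fin.consEquiv (fun _ : Fin (0+1) => Fin m)).sum_comp
      (fun q => (if q 0 = i then (1:ℝ) else 0) * ∏ k : Fin 0, M (q k.castSucc) (q k.succ)))]
    rw [Fintype.sum_prod_type]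
    simp [Matrix.one_apply, eq_comm]
  | succ n ih =>
    intro i
    rw [← ((Fin.consEquiv (fun _ : Fin (n+2) => Fin m)).sum_comp
      (fun q => (if q 0 = i then (1:ℝ) else 0) * ∏ k : Fin (n+1), M (q k.castSucc) (q k.succ)))]
    rw [Fintype.sum_prod_type]
    simp only [Fin.consEquiv_apply]
    have hterm : ∀ (a : Fin m) (q' : Fin (n+1) → Fin m),
        (if (Fin.cons a q' : Fin (n+2) → Fin m) 0 = i then (1:ℝ) else 0) *
          ∏ k : Fin (n+1), M ((Fin.cons a q' : Fin (n+2) → Fin m) k.castSucc)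
            ((Fin.cons a q' : Fin (n+2) → Fin m) k.succ)
        = (if a = i then (1:ℝ) else 0) * (M a (q' 0) *
            ∏ k : Fin n, M (q' k.castSucc) (q' k.succ)) := by
      intro a q'
      simp only [Fin.cons_zero, Fin.prod_univ_succ, ← Fin.succ_castSucc, Fin.cons_succ,
        Fin.castSucc_zero, mul_assoc]
    simp_rw [hterm]
    rw [Finset.sum_eq_single i]
    · simp only [eq_self_iff_true, if_true, one_mul]
      have : ∀ q' : Fin (n+1) → Fin m, M i (q' 0) * ∏ k : Fin n, M (q' k.castSucc) (q' k.succ)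
          = ∑ b, M i b * ((if q' 0 = b then (1:ℝ) else 0) * ∏ k : Fin n, M (q' k.castSucc) (q' k.succ)) := by
        intro q'
        rw [Finset.sum_eq_single (q' 0)]
        · simp
        · intro b _ hb; rw [if_neg (Ne.symm hb)]; ring
        · simp
      simp_rw [this]
      rw [Finset.sum_comm]
      have h2 : ∀ b, ∑ q' : Fin (n+1) → Fin m, M i b * ((if q' 0 = b then (1:ℝ) else 0) *
          ∏ k : Fin n, M (q' k.castSucc) (q' k.succ)) = M i b * ∑ j, (M^n) b j := by
        intro b
        rw [← Finset.mul_sum, ih b]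
      simp_rw [h2]
      rw [pow_succ']
      simp [Matrix.mul_apply, Finset.mul_sum]
      rw [Finset.sum_comm]
    · intro b _ hb
      simp [hb]
    · simp

lemma tends_aux {Ω : Type*} [MeasurableSpace Ω] {e : ℕ}
    (P : Matrix (Fin (e+1+1)) (Fin (e+1+1)) ℝ)
    (μ : Measure Ω) (X : ℕ → Ω → Fin (e+1+1)) (hchain : IsMarkovChain μ P 0 X)
    (habs : μ {ω | hitTime X ω ≠ ⊤} = 1) :
    Tendsto (fun n => ∑ j, ((P.submatrix Fin.castSucc Fin.castSucc)^n) 0 j) atTop (𝓝 0) := by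
  obtain ⟨hprob, hmeas, hpath⟩ := hchain
  set Q := P.submatrix (Fin.castSucc : Fin (e+1) → Fin (e+1+1)) Fin.castSucc with hQ
  set E : ℕ → Set Ω := fun n => {ω | ∀ k ≤ n, X k ω ≠ Fin.last (e+1)} with hE
  have hEmeas : ∀ n, MeasurableSet (E n) := by
    intro n
    have : E n = ⋂ k ∈ Finset.range (n+1), (X k)⁻¹' ({Fin.last (e+1)}ᶜ) := by
      ext ω; simp [hE, Nat.lt_succ_iff]
    rw [this]
    exact Finset.measurableSet_biInter _ fun k _ =>
      (hmeas k) (measurableSet_singleton _).compl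
  -- the measure of E n
  have hreal : ∀ n, (μ (E n)).toReal = ∑ j, (Q^n) 0 j := by
    intro n
    set pq : (Fin (n+1) → Fin (e+1)) → ℕ → Fin (e+1+1) := fun q k =>
      if h : k < n+1 then (q ⟨k, h⟩).castSucc else 0 with hpq
    set Aq : (Fin (n+1) → Fin (e+1)) → Set Ω := fun q => {ω | ∀ k ≤ n, X k ω = pq q k} with hAq
    have hAqmeas : ∀ q, MeasurableSet (Aq q) := by
      intro q
      have : Aq q = ⋂ k ∈ Finset.range (n+1), (X k)⁻¹' {pq q k} := by
        ext ω; simp [hAq, Nat.lt_succ_iff]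
      rw [this]
      exact Finset.measurableSet_biInter _ fun k _ => (hmeas k) (measurableSet_singleton _)
    have hunion : E n = ⋃ q ∈ (Finset.univ : Finset (Fin (n+1) → Fin (e+1))), Aq q := by
      ext ω
      simp only [Set.mem_setOf_eq, Set.mem_iUnion, Finset.mem_univ, exists_true_left, hE,
        hAq, exists_prop, true_and]
      constructor
      · intro h
        refine ⟨fun k => (X k.1 ω).castPred (h k.1 (Nat.lt_succ_iff.mp k.2)), ?_⟩
        intro k hk
        rw [hpq]
        simp only [dif_pos (Nat.lt_succ_iff.mpr hk)]
        rw [Fin.castSucc_castPred]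
      · rintro ⟨q, hq⟩ k hk
        rw [hq k hk, hpq]
        simp only [dif_pos (Nat.lt_succ_iff.mpr hk)]
        exact (Fin.castSucc_lt_last _).ne
    have hdisj : ((Finset.univ : Finset (Fin (n+1) → Fin (e+1))) : Set (Fin (n+1) → Fin (e+1))).PairwiseDisjoint Aq := by
      intro q _ q' _ hqq'
      refine Set.disjoint_left.mpr fun ω hω hω' => hqq' ?_
      funext k
      have h1 := hω k.1 (Nat.lt_succ_iff.mp k.2)
      have h2 := hω' k.1 (Nat.lt_succ_iff.mp k.2)
      rw [h1] at h2
      rw [hpq] at h2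
      simp only [dif_pos k.2] at h2
      exact Fin.castSucc_injective _ (by simpa using h2)
    have hsum : μ (E n) = ∑ q : Fin (n+1) → Fin (e+1), μ (Aq q) := by
      rw [hunion, measure_biUnion_finset hdisj fun q _ => hAqmeas q]
    rw [hsum, ENNReal.toReal_sum (fun q _ => measure_ne_top μ _)]
    have hterm : ∀ q : Fin (n+1) → Fin (e+1), (μ (Aq q)).toReal =
        (if q 0 = 0 then (1:ℝ) else 0) * ∏ k : Fin n, Q (q k.castSucc) (q k.succ) := by
      intro q
      rw [hAq]
      simp only []
      rw [hpath n (pq q)]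
      congr 1
      · rw [hpq]
        simp only [dif_pos (Nat.succ_pos n)]
        rcases eq_or_ne (q 0) 0 with h | h
        · have : (q ⟨0, Nat.succ_pos n⟩).castSucc = (0 : Fin (e+1+1)) := by
            rw [show (⟨0, Nat.succ_pos n⟩ : Fin (n+1)) = 0 from rfl, h]; rfl
          simp [this, h]
        · have : (q ⟨0, Nat.succ_pos n⟩).castSucc ≠ (0 : Fin (e+1+1)) := by
            rw [show (⟨0, Nat.succ_pos n⟩ : Fin (n+1)) = 0 from rfl]
            intro hc
            exact h (Fin.castSucc_injective _ (by simpa using hc))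
          simp [this, h]
      · rw [← Fin.prod_univ_eq_prod_range]
        apply Finset.prod_congr rfl
        intro k _
        have hk1 : (k : ℕ) < n + 1 := Nat.lt_succ_of_lt k.2
        have hk2 : (k : ℕ) + 1 < n + 1 := Nat.succ_lt_succ k.2
        rw [hpq]
        simp only [dif_pos hk1, dif_pos hk2]
        rw [hQ]
        simp only [Matrix.submatrix_apply]
        congr 2
    simp_rw [hterm]
    exact pathSum Q n 0
  -- the tendsto
  have hanti : Antitone E := by
    intro a b hab ω hω k hk; exact hω k (le_trans hk hab)
  have hiInter : (⋂ n, E n) = {ω | hitTime X ω = ⊤} := by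
    ext ω
    simp only [Set.mem_iInter, Set.mem_setOf_eq, hE]
    constructor
    · intro h
      rw [hitTime]
      simp only [iInf_eq_top]
      intro m hm
      exact absurd hm (h m m le_rfl)
    · intro h n k _
      rw [hitTime] at h
      simp only [iInf_eq_top] at h
      intro hc
      exact (ENat.coe_ne_top k) (h k hc)
  have hzero : μ {ω | hitTime X ω = ⊤} = 0 := by
    have hSmeas : MeasurableSet {ω | hitTime X ω = ⊤} := by
      rw [← hiInter]; exact MeasurableSet.iInter fun n => hEmeas n
    have hcompl : {ω | hitTime X ω ≠ ⊤} = {ω | hitTime X ω = ⊤}ᶜ := by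
      ext ω; simp
    rw [hcompl] at habs
    have h2 := measure_compl hSmeas.compl (measure_ne_top μ _)
    rw [compl_compl, habs, measure_univ, tsub_self] at h2
    exact h2
  have h1 : Tendsto (fun n => μ (E n)) atTop (𝓝 0) := by
    have := tendsto_measure_iInter_atTop (fun n => (hEmeas n).nullMeasurableSet) hanti
      ⟨0, measure_ne_top μ _⟩
    rw [hiInter, hzero] at this
    exact this
  have h2 : Tendsto (fun n => (μ (E n)).toReal) atTop (𝓝 0) := by
    have := (ENNReal.tendsto_toReal (by simp : (0:ENNReal) ≠ ⊤)).comp h1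
    simpa [Function.comp_def] using this
  simp_rw [← hreal]
  exact h2

lemma exists_u {m : ℕ} (Q : Matrix (Fin m) (Fin m) ℝ) (c : Fin m → ℝ)
    (hQ : ∀ i j, 0 ≤ Q i j) (hc : ∀ i, 0 ≤ c i) (hrow : ∀ i, (∑ j, Q i j) + c i = 1)
    (i0 : Fin m) (htend : Tendsto (fun n => ∑ j, (Q^n) i0 j) atTop (𝓝 0)) :
    ∃ u : Fin m → ℝ, ((1 - Q) *ᵥ u = c) ∧ u i0 = 1 := by
  set w : ℕ → Fin m → ℝ := fun n => (Q^n) *ᵥ (fun _ => 1) with hw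
  have hwsucc : ∀ n, w (n+1) = Q *ᵥ w n := by
    intro n
    rw [hw]
    simp only [pow_succ', ← mulVec_mulVec]
  have hw0 : w 0 = fun _ => 1 := by simp [hw]
  have hwnonneg : ∀ n j, 0 ≤ w n j := by
    intro n
    induction n with
    | zero => intro j; rw [hw0]; norm_num
    | succ n ih =>
      intro j
      rw [hwsucc n]
      simp only [mulVec, dotProduct]
      exact Finset.sum_nonneg fun k _ => mul_nonneg (hQ j k) (ih k)
  have hwanti : ∀ n j, w (n+1) j ≤ w n j := by
    intro n
    induction n with
    | zero =>
      intro j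
      rw [hwsucc 0, hw0]
      calc (Q *ᵥ fun _ => (1:ℝ)) j = ∑ k, Q j k := by simp [mulVec, dotProduct]
      _ ≤ 1 := by
        have := hrow j
        have := hc j
        linarith
    | succ n ih =>
      intro j
      rw [hwsucc (n+1)]
      conv_rhs => rw [hwsucc n]
      simp only [mulVec, dotProduct]
      exact Finset.sum_le_sum fun k _ => mul_le_mul_of_nonneg_left (ih k) (hQ j k)
  have hmono : ∀ j, Antitone fun n => w n j := fun j =>
    antitone_nat_of_succ_le fun n => hwanti n j
  set L : Fin m → ℝ := fun j => ⨅ n, w n j with hL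
  have hLt : ∀ j, Tendsto (fun n => w n j) atTop (𝓝 (L j)) := fun j =>
    tendsto_atTop_ciInf (hmono j) ⟨0, fun x ⟨n, hn⟩ => hn ▸ hwnonneg n j⟩
  have hLfix : ∀ j, L j = ∑ k, Q j k * L k := by
    intro j
    have h1 : Tendsto (fun n => w (n+1) j) atTop (𝓝 (L j)) :=
      (hLt j).comp (tendsto_add_atTop_nat 1)
    have h2 : Tendsto (fun n => ∑ k, Q j k * w n k) atTop (𝓝 (∑ k, Q j k * L k)) :=
      tendsto_finset_sum _ fun k _ => (hLt k).const_mul _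
    have h3 : (fun n => w (n+1) j) = fun n => ∑ k, Q j k * w n k := by
      funext n; rw [hwsucc n]; simp [mulVec, dotProduct]
    rw [h3] at h1
    exact tendsto_nhds_unique h1 h2
  have hL0 : L i0 = 0 := by
    have : (fun n => w n i0) = fun n => ∑ j, (Q^n) i0 j := by
      funext n; simp [hw, mulVec, dotProduct]
    refine tendsto_nhds_unique (hLt i0) ?_
    rw [this]; exact htend
  refine ⟨fun j => 1 - L j, ?_, by simp only []; rw [hL0]; norm_num⟩
  funext j
  rw [sub_mulVec, one_mulVec]
  simp only [Pi.sub_apply]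
  have : (Q *ᵥ fun j => 1 - L j) j = (∑ k, Q j k) - ∑ k, Q j k * L k := by
    simp [mulVec, dotProduct, mul_sub, Finset.sum_sub_distrib]
  rw [this, ← hLfix j]
  have := hrow j
  linarith

/-- If `P` is skip-free upward and the chain started at `0` is absorbed at `d` almost surely,
then `P(0,1) P(1,2) ⋯ P(d-1,d) = ∏_{i=0}^{d-1} (1 - λ_i)`, where `λ_0, …, λ_{d-1}` are the `d`
non-unit eigenvalues of `P`. -/
theorem prod_superdiag_eq_prod_one_sub_eigenvalues {Ω : Type*} [MeasurableSpace Ω] {d : ℕ}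
    (hd : 1 ≤ d)
    (P : Matrix (Fin (d + 1)) (Fin (d + 1)) ℝ) (hP : IsAbsorbingStochastic P)
    (hsf : SkipFreeUpward P)
    (μ : Measure Ω) (X : ℕ → Ω → Fin (d + 1)) (hchain : IsMarkovChain μ P 0 X)
    (habs : μ {ω | hitTime X ω ≠ ⊤} = 1)
    (lam : Fin d → ℂ)
    (hlam : ∀ x : ℂ,
      det (x • (1 : Matrix (Fin (d + 1)) (Fin (d + 1)) ℂ) - P.map Complex.ofReal) =
        (x - 1) * ∏ i, (x - lam i)) :
    ((∏ i : Fin d, P i.castSucc i.succ : ℝ) : ℂ) = ∏ i, (1 - lam i) := by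
  obtain ⟨e, rfl⟩ : ∃ e, d = e + 1 := ⟨d - 1, (Nat.succ_pred_eq_of_pos hd).symm⟩
  obtain ⟨hPnn, hProw, hPabs⟩ := hP
  set Q := P.submatrix (Fin.castSucc : Fin (e+1) → Fin (e+1+1)) Fin.castSucc with hQdef
  set A := (1 : Matrix (Fin (e+1)) (Fin (e+1)) ℝ) - Q with hAdef
  set c : Fin (e+1) → ℝ := fun j => P j.castSucc (Fin.last (e+1)) with hcdef
  have htend := tends_aux P μ X hchain habs
  have hrow' : ∀ i, (∑ j, Q i j) + c i = 1 := by
    intro i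
    have h := hProw i.castSucc
    rw [Fin.sum_univ_castSucc] at h
    simpa [hQdef, hcdef] using h
  obtain ⟨u, hAu, hu0⟩ := exists_u Q c (fun i j => hPnn _ _) (fun i => hPnn _ _) hrow' 0 htend
  have hdet : det A = ∏ i : Fin (e+1), P i.castSucc i.succ := by
    calc det A = det A * u 0 := by rw [hu0, mul_one]
    _ = (adjugate A *ᵥ (A *ᵥ u)) 0 := by
        rw [mulVec_mulVec, adjugate_mul]
        simp [smul_mulVec]
    _ = (adjugate A *ᵥ c) 0 := by rw [hAu]
    _ = adjugate A 0 (Fin.last e) * c (Fin.last e) := by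
        simp only [mulVec, dotProduct]
        rw [Finset.sum_eq_single (Fin.last e)]
        · intro j _ hj
          have hc0 : c j = 0 := by
            apply hsf
            simp only [Fin.coe_castSucc, Fin.val_last]
            have : (j : ℕ) < e := by
              rcases lt_or_eq_of_le (Nat.lt_succ_iff.mp j.2) with h | h
              · exact h
              · exact absurd (Fin.ext h) hj
            omega
          rw [hc0, mul_zero]
        · simp
    _ = (∏ i : Fin e, P i.castSucc.castSucc i.succ.castSucc) *
          P ((Fin.last e).castSucc) (Fin.last (e+1)) := by
        rw [hAdef, hQdef, adj_entry P hsf]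
    _ = ∏ i : Fin (e+1), P i.castSucc i.succ := by
        rw [Fin.prod_univ_castSucc (f := fun i : Fin (e+1) => P i.castSucc i.succ)]
        congr 1
  have hfin := detA_complex P hPabs lam hlam
  have hA' : ((1 : Matrix (Fin (e+1+1)) (Fin (e+1+1)) ℝ) - P).submatrix Fin.castSucc Fin.castSucc
      = A := by
    ext i j
    simp [hAdef, hQdef, Matrix.submatrix_apply, Matrix.one_apply, Fin.castSucc_inj]
  rw [hA', hdet] at hfin
  exact hfin
end

section
/- If Q is skip-free upward, then for every s, det Ã_1(s) = (−1)^d · Q(0,1)·Q(1,2)⋯Q(d−1,d); in particular det Ã_1(s) does not depend on s. -/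
open MeasureTheory ProbabilityTheory Matrix

/-- `Q` is the generator of a continuous-time Markov chain on the states `{0, 1, …, d}` in
which the state `d` is absorbing: off-diagonal entries are nonnegative, rows sum to zero and
the last row vanishes. -/
def IsAbsorbingGenerator {d : ℕ} (Q : Matrix (Fin (d + 1)) (Fin (d + 1)) ℝ) : Prop :=
  (∀ k l, k ≠ l → 0 ≤ Q k l) ∧ (∀ k, ∑ l, Q k l = 0) ∧ ∀ l, Q (Fin.last d) l = 0

/-- The transition matrix of the embedded jump chain of the generator `Q`: from a state
`k ≠ d` it jumps to `l ≠ k` with probability `Q k l / γ_k` where `γ_k = -Q k k`, and the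
absorbing state `d` is a trap. -/
noncomputable def jumpMatrix {d : ℕ} (Q : Matrix (Fin (d + 1)) (Fin (d + 1)) ℝ) :
    Matrix (Fin (d + 1)) (Fin (d + 1)) ℝ :=
  fun k l =>
    if k = Fin.last d then (if l = Fin.last d then 1 else 0)
    else if l = k then 0 else Q k l / (-(Q k k))

/-- `(Y n)` is the embedded jump chain (started at `i`) and `(E n)` are the holding times of a
continuous-time Markov chain with generator `Q` under the probability measure `μ`: the jump
chain has the finite-dimensional distributions prescribed by `jumpMatrix Q` and, conditionally
on the jump chain, the holding times are independent, `E n` being exponentially distributed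
with rate `γ_{Y n} = -Q (Y n) (Y n)` (the holding times at the absorbing state `d` are
irrelevant and left unspecified). -/
def IsCTMC {Ω : Type*} [MeasurableSpace Ω] (μ : Measure Ω) {d : ℕ}
    (Q : Matrix (Fin (d + 1)) (Fin (d + 1)) ℝ) (i : Fin (d + 1))
    (Y : ℕ → Ω → Fin (d + 1)) (E : ℕ → Ω → ℝ) : Prop :=
  IsProbabilityMeasure μ ∧ (∀ n, Measurable (Y n)) ∧ (∀ n, Measurable (E n)) ∧
    ∀ (n : ℕ) (path : ℕ → Fin (d + 1)) (t : ℕ → ℝ), (∀ k, 0 ≤ t k) →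
      (μ {ω | (∀ k ≤ n, Y k ω = path k) ∧
          ∀ k ≤ n, path k ≠ Fin.last d → t k < E k ω}).toReal =
        (if path 0 = i then 1 else 0) *
          (∏ k ∈ Finset.range n, jumpMatrix Q (path k) (path (k + 1))) *
          ∏ k ∈ Finset.range (n + 1),
            (if path k = Fin.last d then 1 else Real.exp (Q (path k) (path k) * t k))

/-- The number of jumps `N = inf {n | Y n = d}` before absorption,
with value `⊤ = ∞` if the state `d` is never reached. -/
noncomputable def jumpCount {Ω : Type*} {d : ℕ} (Y : ℕ → Ω → Fin (d + 1)) (ω : Ω) : ℕ∞ :=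
  ⨅ (m : ℕ) (_ : Y m ω = Fin.last d), (m : ℕ∞)

/-- The absorbing time `τ = Σ_{n < N} E n` of the state `d` (where `N = jumpCount Y`),
viewed as a real number on the event `{N < ∞}`. -/
noncomputable def absorbTime {Ω : Type*} {d : ℕ} (Y : ℕ → Ω → Fin (d + 1)) (E : ℕ → Ω → ℝ)
    (ω : Ω) : ℝ :=
  ∑ n ∈ Finset.range (jumpCount Y ω).toNat, E n ω

/-- The Laplace transform `f(s) = E[exp (-s τ)]` of the absorbing time `τ` of the state `d`,
with the convention `exp (-s · ∞) = 0` (i.e. the integrand vanishes when `N = ∞`). -/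
noncomputable def lapFun {Ω : Type*} [MeasurableSpace Ω] (μ : Measure Ω) {d : ℕ}
    (Y : ℕ → Ω → Fin (d + 1)) (E : ℕ → Ω → ℝ) (s : ℝ) : ℝ :=
  ∫ ω, (if jumpCount Y ω = ⊤ then 0 else Real.exp (-s * absorbTime Y E ω)) ∂μ

/-- `subAt Q s j` is the matrix `Ã_{j+1}(s)` of the paper: the `d × d` matrix obtained from
`s • I_{d+1} - Q` by deleting its last row and its column of index `j`. -/
noncomputable def subAt {R : Type*} [CommRing R] {d : ℕ}
    (Q : Matrix (Fin (d + 1)) (Fin (d + 1)) R) (s : R) (j : Fin (d + 1)) :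
    Matrix (Fin d) (Fin d) R :=
  (s • (1 : Matrix (Fin (d + 1)) (Fin (d + 1)) R) - Q).submatrix Fin.castSucc j.succAbove

/-- `Q` is skip-free upward: upward jumps are of unit size only. -/
def SkipFreeUpwardQ {d : ℕ} (Q : Matrix (Fin (d + 1)) (Fin (d + 1)) ℝ) : Prop :=
  ∀ i j : Fin (d + 1), (i : ℕ) + 1 < (j : ℕ) → Q i j = 0

/-- If `Q` is skip-free upward, then for every `s`,
`det Ã_1(s) = (-1)^d · Q(0,1) Q(1,2) ⋯ Q(d-1,d)`; in particular it does not depend on `s`. -/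
theorem det_subAt_zero_eq {d : ℕ} (hd : 1 ≤ d)
    (Q : Matrix (Fin (d + 1)) (Fin (d + 1)) ℝ) (hQ : IsAbsorbingGenerator Q)
    (hsf : SkipFreeUpwardQ Q) :
    ∀ s : ℝ, det (subAt Q s 0) = (-1) ^ d * ∏ i : Fin d, Q i.castSucc i.succ := by
  
  intro s
  have h : (subAt Q s 0).BlockTriangular OrderDual.toDual := by
    intro a b hab
    have hab' : (a : ℕ) < b := hab
    simp only [subAt, submatrix_apply, Fin.succAbove_zero, Matrix.sub_apply, Matrix.smul_apply, one_apply,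
      smul_eq_mul]
    have h1 : Fin.castSucc a ≠ Fin.succ b := by
      intro h
      have := congrArg (Fin.val) h
      simp at this
      omega
    rw [if_neg h1, hsf _ _ (by simp; omega)]
    ring
  rw [Matrix.det_of_lowerTriangular _ h]
  have : ∀ i : Fin d, subAt Q s 0 i i = -Q i.castSucc i.succ := by
    intro i
    simp only [subAt, submatrix_apply, Fin.succAbove_zero, Matrix.sub_apply, Matrix.smul_apply, one_apply,
      smul_eq_mul]
    rw [if_neg (by intro h; have := congrArg Fin.val h; simp at this)]
    ring
  simp_rw [this]
  calc ∏ i : Fin d, -Q i.castSucc i.succ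
      = ∏ i : Fin d, (-1) * Q i.castSucc i.succ := by
        refine Finset.prod_congr rfl fun i _ => by ring
    _ = (-1) ^ d * ∏ i : Fin d, Q i.castSucc i.succ := by
        rw [Finset.prod_mul_distrib, Finset.prod_const, Finset.card_univ, Fintype.card_fin]
end

section
/- If Q is skip-free upward and the chain started at state 0 is absorbed at d almost surely (P(τ_{0,d} < ∞) = 1), then Q(0,1)·Q(1,2)⋯Q(d−1,d) = ∏_{i=0}^{d−1} λ_i, where λ_0,…,λ_{d−1} are the d non-zero eigenvalues of −Q. -/
open MeasureTheory ProbabilityTheory Matrix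

open Finset in
private lemma key_det_aux {d : ℕ} (Qc : Matrix (Fin (d+1)) (Fin (d+1)) ℂ)
    (hsum : ∀ k, ∑ l, Qc k l = 0)
    (hsf : ∀ i j : Fin (d+1), (i : ℕ) + 1 < (j : ℕ) → Qc i j = 0) :
    Matrix.det ((-Qc).submatrix Fin.castSucc Fin.castSucc)
      = ∏ i : Fin d, Qc i.castSucc i.succ := by
  classical
  set B : Matrix (Fin d) (Fin d) ℂ := (-Qc).submatrix Fin.castSucc Fin.castSucc with hB
  set U : Matrix (Fin d) (Fin d) ℂ := Matrix.of fun i j => if i ≤ j then 1 else 0 with hUdef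
  have hUtri : U.BlockTriangular id := by
    intro i j hij
    simp only [id] at hij
    simp [hUdef, not_le.mpr hij]
  have hUdet : U.det = 1 := by
    rw [Matrix.det_of_upperTriangular hUtri]
    simp [hUdef]
  have hC : ∀ k j : Fin d, (B * U) k j
      = ∑ l : Fin (d+1), if (j : ℕ) < (l : ℕ) then Qc k.castSucc l else 0 := by
    intro k j
    have h1 : (B * U) k j = ∑ l : Fin d, if l ≤ j then -Qc k.castSucc l.castSucc else 0 := by
      rw [Matrix.mul_apply]
      refine Finset.sum_congr rfl fun l _ => ?_
      by_cases h : l ≤ j <;> simp [hB, hUdef, h]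
    have h2 : ∀ l : Fin d, (if l ≤ j then -Qc k.castSucc l.castSucc else 0)
        = -Qc k.castSucc l.castSucc
          + (if (j : ℕ) < ((l.castSucc : Fin (d+1)) : ℕ) then Qc k.castSucc l.castSucc else 0) := by
      intro l
      by_cases h : l ≤ j
      · rw [if_pos h, if_neg, add_zero]
        simpa using not_lt.mpr h
      · rw [if_neg h, if_pos, neg_add_cancel]
        simpa using not_le.mp h
    have h3 : ∑ l : Fin d, -Qc k.castSucc l.castSucc = Qc k.castSucc (Fin.last d) := by
      have hs := hsum k.castSucc
      rw [Fin.sum_univ_castSucc] at hs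
      rw [Finset.sum_neg_distrib]
      linear_combination -hs
    rw [h1, Finset.sum_congr rfl fun l _ => h2 l, Finset.sum_add_distrib, h3,
      Fin.sum_univ_castSucc (f := fun l : Fin (d+1) =>
        if (j : ℕ) < (l : ℕ) then Qc k.castSucc l else 0)]
    have hjd : ((j : ℕ) < ((Fin.last d : Fin (d+1)) : ℕ)) := by
      simpa using j.isLt
    rw [if_pos hjd]
    ring
  have hlow : (B * U).BlockTriangular OrderDual.toDual := by
    intro i j hij
    have hij' : (i : ℕ) < (j : ℕ) := hij
    rw [hC]
    refine Finset.sum_eq_zero fun l _ => ?_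
    by_cases h : (j : ℕ) < (l : ℕ)
    · rw [if_pos h, hsf]
      simp only [Fin.coe_castSucc]
      omega
    · rw [if_neg h]
  have hdiag : ∀ k : Fin d, (B * U) k k = Qc k.castSucc k.succ := by
    intro k
    rw [hC, Finset.sum_eq_single k.succ]
    · rw [if_pos]
      simp [Fin.val_succ]
    · intro l _ hl
      by_cases h : (k : ℕ) < (l : ℕ)
      · rw [if_pos h, hsf]
        have hne : (l : ℕ) ≠ (k : ℕ) + 1 := by
          intro he
          exact hl (Fin.ext (by simp [Fin.val_succ, he]))
        simp only [Fin.coe_castSucc]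
        omega
      · rw [if_neg h]
    · intro h
      exact absurd (Finset.mem_univ _) h
  calc B.det = B.det * U.det := by rw [hUdet, mul_one]
    _ = (B * U).det := (Matrix.det_mul B U).symm
    _ = ∏ k, (B * U) k k := Matrix.det_of_lowerTriangular _ hlow
    _ = ∏ k, Qc k.castSucc k.succ := Finset.prod_congr rfl fun k _ => hdiag k

/-- If `Q` is skip-free upward and the chain started at `0` is absorbed at `d` almost surely,
then `Q(0,1) Q(1,2) ⋯ Q(d-1,d) = ∏_{i=0}^{d-1} λ_i`, where `λ_0, …, λ_{d-1}` are the `d`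
non-zero eigenvalues of `-Q`. -/

theorem prod_superdiag_eq_prod_eigenvalues {Ω : Type*} [MeasurableSpace Ω] {d : ℕ} (hd : 1 ≤ d)
    (Q : Matrix (Fin (d + 1)) (Fin (d + 1)) ℝ) (hQ : IsAbsorbingGenerator Q)
    (hγ : ∀ k : Fin (d + 1), k ≠ Fin.last d → 0 < -(Q k k))
    (hsf : SkipFreeUpwardQ Q)
    (μ : Measure Ω) (Y : ℕ → Ω → Fin (d + 1)) (E : ℕ → Ω → ℝ)
    (hchain : IsCTMC μ Q 0 Y E)
    (habs : μ {ω | jumpCount Y ω ≠ ⊤} = 1)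
    (lam : Fin d → ℂ)
    (hlam : ∀ x : ℂ,
      det (x • (1 : Matrix (Fin (d + 1)) (Fin (d + 1)) ℂ) - Q.map Complex.ofReal) =
        x * ∏ i, (x + lam i)) :
    ((∏ i : Fin d, Q i.castSucc i.succ : ℝ) : ℂ) = ∏ i, lam i :=  by
  classical
  obtain ⟨hoff, hsum, hlastrow⟩ := hQ
  set Qc : Matrix (Fin (d+1)) (Fin (d+1)) ℂ := Q.map Complex.ofReal with hQc
  have hsumC : ∀ k, ∑ l, Qc k l = 0 := by
    intro k
    have := hsum k
    simp only [hQc, Matrix.map_apply]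
    rw [← Complex.ofReal_sum]
    simp [this]
  have hsfC : ∀ i j : Fin (d+1), (i : ℕ) + 1 < (j : ℕ) → Qc i j = 0 := by
    intro i j h
    simp [hQc, Matrix.map_apply, hsf i j h]
  have hlastC : ∀ l, Qc (Fin.last d) l = 0 := by
    intro l
    simp [hQc, Matrix.map_apply, hlastrow l]
  have hexp : ∀ x : ℂ, Matrix.det (x • (1 : Matrix (Fin (d+1)) (Fin (d+1)) ℂ) - Qc) =
      x * Matrix.det ((x • (1 : Matrix (Fin (d+1)) (Fin (d+1)) ℂ) - Qc).submatrix
        Fin.castSucc ((Fin.last d).succAbove)) := by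
    intro x
    rw [Matrix.det_succ_row (x • 1 - Qc) (Fin.last d), Finset.sum_eq_single (Fin.last d)]
    · have hone : ((-1 : ℂ)) ^ ((Fin.last d : Fin (d+1)) + (Fin.last d : Fin (d+1)) : ℕ) = 1 := by
        simp only [Fin.val_last]
        exact Even.neg_one_pow ⟨d, rfl⟩
      have hentry : (x • (1 : Matrix (Fin (d+1)) (Fin (d+1)) ℂ) - Qc) (Fin.last d) (Fin.last d)
          = x := by
        simp [Matrix.sub_apply, Matrix.smul_apply, Matrix.one_apply, hlastC]
      rw [hone, hentry, one_mul, Fin.succAbove_last]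
    · intro j _ hj
      have hentry : (x • (1 : Matrix (Fin (d+1)) (Fin (d+1)) ℂ) (Fin.last d) j
          - Qc (Fin.last d) j) = 0 := by
        simp [Matrix.one_apply, Ne.symm hj, hlastC]
      simp only [Matrix.sub_apply, Matrix.smul_apply, smul_eq_mul]
      rw [show x * (1 : Matrix (Fin (d+1)) (Fin (d+1)) ℂ) (Fin.last d) j - Qc (Fin.last d) j
        = 0 by simpa [smul_eq_mul] using hentry]
      ring
    · intro h
      exact absurd (Finset.mem_univ _) h
  have hg : Continuous fun x : ℂ => Matrix.det
      ((x • (1 : Matrix (Fin (d+1)) (Fin (d+1)) ℂ) - Qc).submatrix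
        Fin.castSucc ((Fin.last d).succAbove)) := by
    apply Continuous.matrix_det
    apply continuous_pi
    intro i
    apply continuous_pi
    intro j
    simp only [Matrix.submatrix_apply, Matrix.sub_apply, Matrix.smul_apply, smul_eq_mul]
    fun_prop
  have hh : Continuous fun x : ℂ => ∏ i, (x + lam i) := by
    apply continuous_finset_prod
    intro i _
    fun_prop
  have heq : (fun x : ℂ => Matrix.det
      ((x • (1 : Matrix (Fin (d+1)) (Fin (d+1)) ℂ) - Qc).submatrix
        Fin.castSucc ((Fin.last d).succAbove)))
      = fun x : ℂ => ∏ i, (x + lam i) := by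
    apply Continuous.ext_on (dense_compl_singleton (0 : ℂ)) hg hh
    intro x hx
    have hx0 : x ≠ 0 := hx
    have hl := hlam x
    rw [hexp x] at hl
    exact mul_left_cancel₀ hx0 hl
  have h0 := congrFun heq 0
  simp only [zero_smul, zero_sub, zero_add] at h0
  have hsucc : (Fin.last d).succAbove = Fin.castSucc := Fin.succAbove_last
  rw [hsucc, key_det_aux Qc hsumC hsfC] at h0
  rw [← h0, Complex.ofReal_prod]
  exact Finset.prod_congr rfl fun i _ => rfl
end
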